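/- arXiv:2104.11527 — 4 statements merged into one kernel-verified Lean document; each statement's English description precedes it below -/
import Mathlib

section
/- Let n ≥ 3 be an integer, let N > n be real, and let v₀ > 0 be the unique positive root of sinh(n·v) = N·sinh(v). Define h(v) = sinh²(nv) - N²·sinh²(v). Then h is negative on (0, v₀), vanishes at v = 0 and at v = v₀, and is positive and strictly increasing on (v₀, ∞). -/
/-!
Write `g v = sinh (n v) / sinh v`. An induction on `n` gives `sinh (n v) cosh v < n cosh (n v) sinh v`
for `v > 0`, which is exactly the positivity of `g'`, so `g` and hence `g²` are strictly increasing
on `(0, ∞)`. The root condition says `N² = g v₀ ²`, and for `v ≠ 0`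
`h v = sinh² v · (g v ² - g v₀ ²)`: the sign of `h` on `(0, ∞)` is that of `v - v₀`, and beyond `v₀`
the function `h` is a product of two positive strictly increasing factors.
-/

open Real Set

lemma sinh_nat_mul_mul_cosh_lt {n : ℕ} (hn : 2 ≤ n) {v : ℝ} (hv : 0 < v) :
    sinh (n * v) * cosh v < n * cosh (n * v) * sinh v := by
  have hs : 0 < sinh v := sinh_pos_iff.2 hv
  induction n, hn using Nat.le_induction with
  | base =>
    rw [show ((2 : ℕ) : ℝ) * v = v + v by push_cast; ring, sinh_add, cosh_add]
    push_cast
    nlinarith [pow_pos hs 3]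
  | succ m hm ih =>
    have hsm : 0 < sinh (m * v) := sinh_pos_iff.2 (mul_pos (by exact_mod_cast (by omega : 0 < m)) hv)
    rw [show ((m + 1 : ℕ) : ℝ) * v = m * v + v by push_cast; ring, sinh_add, cosh_add]
    push_cast
    nlinarith [mul_lt_mul_of_pos_right ih (cosh_pos v), cosh_sq v, mul_pos (mul_pos hsm hs) hs]

lemma strictMonoOn_sinh_nat_mul_div_sinh {n : ℕ} (hn : 2 ≤ n) :
    StrictMonoOn (fun v => sinh (n * v) / sinh v) (Ioi 0) := by
  have hsinh : ∀ x ∈ Ioi (0 : ℝ), sinh x ≠ 0 := fun x hx => (sinh_pos_iff.2 hx).ne'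
  refine strictMonoOn_of_hasDerivWithinAt_pos (convex_Ioi 0)
    (by fun_prop (disch := exact hsinh)) (fun x hx => ?_) (fun x hx => ?_)
    (f' := fun x => (n * cosh (n * x) * sinh x - sinh (n * x) * cosh x) / sinh x ^ 2)
  · rw [interior_Ioi] at hx
    have := ((hasDerivAt_id' x).const_mul (n : ℝ)).sinh.div (hasDerivAt_sinh x) (hsinh x hx)
    exact (this.congr_deriv (by ring)).hasDerivWithinAt
  · rw [interior_Ioi] at hx
    exact div_pos (sub_pos.2 (sinh_nat_mul_mul_cosh_lt hn hx)) (pow_pos (sinh_pos_iff.2 hx) 2)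

lemma strictMonoOn_sinh_nat_mul_sq_div_sinh_sq {n : ℕ} (hn : 2 ≤ n) :
    StrictMonoOn (fun v => sinh (n * v) ^ 2 / sinh v ^ 2) (Ioi 0) := by
  intro a ha b hb hab
  have hpos : 0 < sinh (n * a) / sinh a :=
    div_pos (sinh_pos_iff.2 (mul_pos (by exact_mod_cast (by omega : 0 < n)) ha)) (sinh_pos_iff.2 ha)
  simpa only [div_pow] using
    pow_lt_pow_left₀ (strictMonoOn_sinh_nat_mul_div_sinh hn ha hb hab) hpos.le two_ne_zero

theorem h_sign_of_N_gt_n_general (n : ℕ) (hn : 3 ≤ n) (N : ℝ)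
    (v₀ : ℝ) (hv₀ : 0 < v₀) (hroot : Real.sinh (n * v₀) = N * Real.sinh v₀)
    (h : ℝ → ℝ)
    (hh : ∀ v : ℝ, h v = Real.sinh (n * v) ^ 2 - N ^ 2 * Real.sinh v ^ 2) :
    (∀ v ∈ Set.Ioo 0 v₀, h v < 0) ∧ h 0 = 0 ∧ h v₀ = 0 ∧
    (∀ v : ℝ, v₀ < v → 0 < h v) ∧ StrictMonoOn h (Set.Ioi v₀) := by
  set G : ℝ → ℝ := fun v => sinh (n * v) ^ 2 / sinh v ^ 2
  have hG : StrictMonoOn G (Ioi 0) := strictMonoOn_sinh_nat_mul_sq_div_sinh_sq (by omega)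
  have hN : N ^ 2 = G v₀ := by
    have : sinh v₀ ≠ 0 := (sinh_pos_iff.2 hv₀).ne'
    simp only [G, hroot]
    field_simp
  have hfactor : ∀ v, 0 < v → h v = sinh v ^ 2 * (G v - G v₀) := fun v hv => by
    have : sinh v ≠ 0 := (sinh_pos_iff.2 hv).ne'
    rw [hh, hN]
    simp only [G]
    field_simp
  have hsq : ∀ v, 0 < v → 0 < sinh v ^ 2 := fun v hv => pow_pos (sinh_pos_iff.2 hv) 2
  have hG_above : ∀ v, v₀ < v → G v₀ < G v := fun v hv => hG hv₀ (hv₀.trans hv) hv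
  refine ⟨fun v hv => ?_, by simp [hh], by rw [hh, hroot]; ring, fun v hv => ?_,
    fun a ha b _ hab => ?_⟩
  · rw [hfactor v hv.1]
    exact mul_neg_of_pos_of_neg (hsq v hv.1) (sub_neg.2 (hG hv.1 hv₀ hv.2))
  · rw [hfactor v (hv₀.trans hv)]
    exact mul_pos (hsq v (hv₀.trans hv)) (sub_pos.2 (hG_above v hv))
  · have ha0 : 0 < a := hv₀.trans ha
    rw [hfactor a ha0, hfactor b (ha0.trans hab)]
    exact mul_lt_mul'' (pow_lt_pow_left₀ (sinh_lt_sinh.2 hab) (sinh_pos_iff.2 ha0).le two_ne_zero)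
      (sub_lt_sub_right (hG ha0 (ha0.trans hab) hab) _) (hsq a ha0).le (sub_pos.2 (hG_above a ha)).le

theorem h_sign_of_N_gt_n (n : ℕ) (hn : 3 ≤ n) (N : ℝ) (hNn : (n : ℝ) < N)
    (v₀ : ℝ) (hv₀ : 0 < v₀) (hroot : Real.sinh (n * v₀) = N * Real.sinh v₀)
    (h : ℝ → ℝ)
    (hh : ∀ v : ℝ, h v = Real.sinh (n * v) ^ 2 - N ^ 2 * Real.sinh v ^ 2) :
    (∀ v ∈ Set.Ioo 0 v₀, h v < 0) ∧ h 0 = 0 ∧ h v₀ = 0 ∧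
    (∀ v : ℝ, v₀ < v → 0 < h v) ∧ StrictMonoOn h (Set.Ioi v₀) :=
  h_sign_of_N_gt_n_general n hn N v₀ hv₀ hroot h hh
end

section
/- Let n ≥ 3 be an integer. Then the maximum value N_min(n) of |U_{n-1}(x)| over the interval [-cos(π/n), cos(π/n)] satisfies 1 ≤ N_min(n) < n, and it is attained at a point x'_0 in the open interval (cos(2π/n), cos(π/n)) at which U'_{n-1} vanishes. -/
/-!
Writing `x = cos θ`, one has `U_{n-1}(x) = sin (nθ) / sin θ`, and `[-cos (π/n), cos (π/n)]`
corresponds to `θ ∈ [π/n, π - π/n]`, where `|U_{n-1}(x)| ≤ 1 / sin θ ≤ 1 / sin (π/n) ≤ n/2`.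
The outer arc `[cos (2π/n), cos (π/n)]` is bounded by two zeros of `U_{n-1}`, while at the angle
`3π/(2n)` in between `|U_{n-1}| = 1 / sin (3π/(2n)) ≥ 1`; so the maximum over the arc is interior,
where `U'_{n-1}` vanishes. This value also dominates `1 / sin θ` for `θ ∈ [2π/n, π - 2π/n]`, and
`|U_{n-1}|` is even, so the maximum over the arc is the maximum over the whole interval.
-/

open Polynomial Polynomial.Chebyshev Real Set

lemma sin_le_sin_of_le_of_le_pi_sub {a θ : ℝ} (ha : 0 ≤ a) (haθ : a ≤ θ) (hθ : θ ≤ π - a) :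
    sin a ≤ sin θ := by
  have hsub : 0 ≤ sin ((θ - a) / 2) := sin_nonneg_of_nonneg_of_le_pi (by linarith) (by linarith)
  have hadd : 0 ≤ cos ((θ + a) / 2) :=
    cos_nonneg_of_neg_pi_div_two_le_of_le (by linarith) (by linarith)
  nlinarith [sin_sub_sin θ a]

lemma exists_mem_Icc_cos_eq {b x : ℝ} (hb₀ : 0 ≤ b) (hbπ : b ≤ π)
    (hx : x ∈ Icc (-cos b) (cos b)) : ∃ θ ∈ Icc b (π - b), cos θ = x := by
  refine ⟨arccos x, ⟨?_, ?_⟩, cos_arccos ?_ ?_⟩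
  · simpa [arccos_cos hb₀ hbπ] using arccos_le_arccos hx.2
  · simpa [arccos_neg, arccos_cos hb₀ hbπ] using arccos_le_arccos hx.1
  · linarith [hx.1, cos_le_one b]
  · linarith [hx.2, cos_le_one b]

lemma deriv_eq_zero_of_isLocalMax_abs {f : ℝ → ℝ} {a : ℝ} (h : IsLocalMax (fun x ↦ |f x|) a)
    (ha : f a ≠ 0) : deriv f a = 0 := by
  rcases ha.lt_or_gt with hneg | hpos
  · refine IsLocalMin.deriv_eq_zero (h.mono fun y hy ↦ ?_)
    linarith [neg_abs_le (f y), abs_of_neg hneg, show |f y| ≤ |f a| from hy]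
  · refine IsLocalMax.deriv_eq_zero (h.mono fun y hy ↦ ?_)
    linarith [le_abs_self (f y), abs_of_pos hpos, show |f y| ≤ |f a| from hy]

lemma abs_U_sub_one_eval_neg (n : ℕ) (x : ℝ) :
    |(U ℝ ((n : ℤ) - 1)).eval (-x)| = |(U ℝ ((n : ℤ) - 1)).eval x| := by
  cases n with
  | zero => simp
  | succ m => simp [abs_mul]

lemma U_sub_one_eval_cos_mul_sin (n : ℕ) (θ : ℝ) :
    (U ℝ ((n : ℤ) - 1)).eval (cos θ) * sin θ = sin (n * θ) := by
  simp

lemma abs_U_sub_one_eval_cos (n : ℕ) {θ : ℝ} (hθ : 0 < sin θ) :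
    |(U ℝ ((n : ℤ) - 1)).eval (cos θ)| = |sin (n * θ)| / sin θ := by
  rw [eq_div_iff hθ.ne', ← U_sub_one_eval_cos_mul_sin, abs_mul, abs_of_pos hθ]

lemma abs_U_sub_one_eval_cos_le (n : ℕ) {θ : ℝ} (hθ : 0 < sin θ) :
    |(U ℝ ((n : ℤ) - 1)).eval (cos θ)| ≤ 1 / sin θ := by
  rw [abs_U_sub_one_eval_cos n hθ]
  gcongr
  exact abs_sin_le_one _

lemma U_sub_one_eval_cos_mul_pi_div {n k : ℕ} (hk₀ : 0 < k) (hkn : k < n) :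
    (U ℝ ((n : ℤ) - 1)).eval (cos (k * π / n)) = 0 := by
  have hk : (0 : ℝ) < k := by exact_mod_cast hk₀
  have hn : (0 : ℝ) < n := by exact_mod_cast hk₀.trans hkn
  have hθ : 0 < sin (k * π / n) := by
    refine sin_pos_of_pos_of_lt_pi (by positivity) ?_
    rw [div_lt_iff₀ hn, mul_comm π]
    gcongr
  have h := U_sub_one_eval_cos_mul_sin n (k * π / n)
  rw [mul_div_cancel₀ _ hn.ne', sin_nat_mul_pi] at h
  exact (mul_eq_zero.mp h).resolve_right hθ.ne'

lemma pi_div_natCast_le_pi_div_two {n : ℕ} (hn : 2 ≤ n) : π / n ≤ π / 2 := by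
  gcongr
  exact_mod_cast hn

lemma sin_three_halves_pi_div_pos {n : ℕ} (hn : 2 ≤ n) : 0 < sin (3 / 2 * (π / n)) :=
  sin_pos_of_pos_of_lt_pi (by positivity) (by linarith [pi_div_natCast_le_pi_div_two hn, pi_pos])

lemma abs_U_sub_one_eval_cos_three_halves_pi_div (n : ℕ) (hn : 2 ≤ n) :
    |(U ℝ ((n : ℤ) - 1)).eval (cos (3 / 2 * (π / n)))| = 1 / sin (3 / 2 * (π / n)) := by
  have hnθ : (n : ℝ) * (3 / 2 * (π / n)) = π / 2 + π := by
    field_simp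
    ring
  rw [abs_U_sub_one_eval_cos n (sin_three_halves_pi_div_pos hn), hnθ, sin_add_pi,
    sin_pi_div_two, abs_neg, abs_one]

lemma one_le_abs_U_sub_one_eval_cos_three_halves_pi_div (n : ℕ) (hn : 2 ≤ n) :
    1 ≤ |(U ℝ ((n : ℤ) - 1)).eval (cos (3 / 2 * (π / n)))| := by
  rw [abs_U_sub_one_eval_cos_three_halves_pi_div n hn]
  exact one_le_one_div (sin_three_halves_pi_div_pos hn) (sin_le_one _)

lemma abs_U_sub_one_eval_le_half (n : ℕ) (hn : 2 ≤ n) {x : ℝ}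
    (hx : x ∈ Icc (-cos (π / n)) (cos (π / n))) : |(U ℝ ((n : ℤ) - 1)).eval x| ≤ n / 2 := by
  have ha : 0 < π / n := by positivity
  have ha' := pi_div_natCast_le_pi_div_two hn
  obtain ⟨θ, ⟨hθ₁, hθ₂⟩, rfl⟩ := exists_mem_Icc_cos_eq ha.le (by linarith [pi_pos]) hx
  have hsin : 2 / n ≤ sin θ := calc
    (2 : ℝ) / n = 2 / π * (π / n) := by field_simp
    _ ≤ sin (π / n) := mul_le_sin ha.le ha'
    _ ≤ sin θ := sin_le_sin_of_le_of_le_pi_sub ha.le hθ₁ hθ₂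
  calc |(U ℝ ((n : ℤ) - 1)).eval (cos θ)| ≤ 1 / sin θ :=
        abs_U_sub_one_eval_cos_le n ((by positivity : (0 : ℝ) < 2 / n).trans_le hsin)
    _ ≤ 1 / (2 / n) := by gcongr
    _ = n / 2 := one_div_div (2 : ℝ) n

lemma cos_three_halves_pi_div_mem_Icc (n : ℕ) (hn : 2 ≤ n) :
    cos (3 / 2 * (π / n)) ∈ Icc (cos (2 * π / n)) (cos (π / n)) := by
  have ha : 0 < π / n := by positivity
  have ha' := pi_div_natCast_le_pi_div_two hn
  rw [mul_div_assoc]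
  exact ⟨cos_le_cos_of_nonneg_of_le_pi (by positivity) (by linarith) (by linarith),
    cos_le_cos_of_nonneg_of_le_pi ha.le (by linarith) (by linarith)⟩

lemma abs_U_sub_one_eval_le_of_mem_Icc_cos_two_pi_div (n : ℕ) (hn : 2 ≤ n) {x : ℝ}
    (hx : x ∈ Icc (-cos (2 * π / n)) (cos (2 * π / n))) :
    |(U ℝ ((n : ℤ) - 1)).eval x| ≤ |(U ℝ ((n : ℤ) - 1)).eval (cos (3 / 2 * (π / n)))| := by
  have ha : 0 < π / n := by positivity
  have ha' := pi_div_natCast_le_pi_div_two hn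
  rw [mul_div_assoc] at hx
  obtain ⟨θ, ⟨hθ₁, hθ₂⟩, rfl⟩ := exists_mem_Icc_cos_eq (by positivity) (by linarith) hx
  have hsin : sin (3 / 2 * (π / n)) ≤ sin θ :=
    sin_le_sin_of_le_of_le_pi_sub (by positivity) (by linarith) (by linarith)
  rw [abs_U_sub_one_eval_cos_three_halves_pi_div n hn]
  calc |(U ℝ ((n : ℤ) - 1)).eval (cos θ)| ≤ 1 / sin θ :=
        abs_U_sub_one_eval_cos_le n ((sin_three_halves_pi_div_pos hn).trans_le hsin)
    _ ≤ 1 / sin (3 / 2 * (π / n)) := by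
      gcongr
      exact sin_three_halves_pi_div_pos hn

lemma neg_cos_pi_div_le_cos_two_pi_div {n : ℕ} (hn : 3 ≤ n) : -cos (π / n) ≤ cos (2 * π / n) := by
  have hn' : (3 : ℝ) ≤ n := by exact_mod_cast hn
  have h : 3 * (π / n) ≤ π := by
    rw [mul_div_assoc', div_le_iff₀ (by positivity)]
    nlinarith [pi_pos]
  rw [← cos_pi_sub, mul_div_assoc]
  have ha : 0 < π / n := by positivity
  exact cos_le_cos_of_nonneg_of_le_pi (by positivity) (by linarith) (by linarith)

lemma isMaxOn_abs_U_sub_one_eval_Icc (n : ℕ) (hn : 2 ≤ n) {x₀ : ℝ}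
    (h : IsMaxOn (fun x ↦ |(U ℝ ((n : ℤ) - 1)).eval x|) (Icc (cos (2 * π / n)) (cos (π / n))) x₀) :
    IsMaxOn (fun x ↦ |(U ℝ ((n : ℤ) - 1)).eval x|) (Icc (-cos (π / n)) (cos (π / n))) x₀ := by
  intro x ⟨hx₁, hx₂⟩
  show |(U ℝ ((n : ℤ) - 1)).eval x| ≤ |(U ℝ ((n : ℤ) - 1)).eval x₀|
  rcases le_or_gt (cos (2 * π / n)) x with hx | hx
  · exact h ⟨hx, hx₂⟩
  rcases le_or_gt x (-cos (2 * π / n)) with hx' | hx'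
  · rw [← abs_U_sub_one_eval_neg]
    exact h ⟨le_neg.mpr hx', neg_le.mpr hx₁⟩
  · exact (abs_U_sub_one_eval_le_of_mem_Icc_cos_two_pi_div n hn ⟨hx'.le, hx.le⟩).trans
      (h (cos_three_halves_pi_div_mem_Icc n hn))

theorem Nmin_exists (n : ℕ) (hn : 3 ≤ n) :
    ∃ x₀' ∈ Set.Ioo (Real.cos (2 * π / n)) (Real.cos (π / n)),
      (Polynomial.derivative (U ℝ ((n : ℤ) - 1))).eval x₀' = 0 ∧
      IsMaxOn (fun x : ℝ => |(U ℝ ((n : ℤ) - 1)).eval x|)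
        (Set.Icc (-(Real.cos (π / n))) (Real.cos (π / n))) x₀' ∧
      1 ≤ |(U ℝ ((n : ℤ) - 1)).eval x₀'| ∧ |(U ℝ ((n : ℤ) - 1)).eval x₀'| < (n : ℝ) := by
  have hn₂ : 2 ≤ n := by omega
  obtain ⟨x₀, hx₀, hmax⟩ := isCompact_Icc.exists_isMaxOn
    ⟨_, cos_three_halves_pi_div_mem_Icc n hn₂⟩
    (continuous_abs.comp (U ℝ ((n : ℤ) - 1)).continuous).continuousOn
  have hone : 1 ≤ |(U ℝ ((n : ℤ) - 1)).eval x₀| :=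
    (one_le_abs_U_sub_one_eval_cos_three_halves_pi_div n hn₂).trans
      (hmax (cos_three_halves_pi_div_mem_Icc n hn₂))
  have hne : (U ℝ ((n : ℤ) - 1)).eval x₀ ≠ 0 := fun h ↦ by norm_num [h] at hone
  have hx₀' : x₀ ∈ Ioo (cos (2 * π / n)) (cos (π / n)) := by
    refine ⟨hx₀.1.lt_of_ne ?_, hx₀.2.lt_of_ne ?_⟩ <;> rintro rfl <;> apply hne
    · exact_mod_cast U_sub_one_eval_cos_mul_pi_div (k := 2) two_pos hn
    · simpa using U_sub_one_eval_cos_mul_pi_div (k := 1) one_pos (by omega)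
  have hlt : |(U ℝ ((n : ℤ) - 1)).eval x₀| < n :=
    (abs_U_sub_one_eval_le_half n hn₂
      ⟨(neg_cos_pi_div_le_cos_two_pi_div hn).trans hx₀.1, hx₀.2⟩).trans_lt
      (half_lt_self (by positivity))
  refine ⟨x₀, hx₀', ?_, isMaxOn_abs_U_sub_one_eval_Icc n hn₂ hmax, hone, hlt⟩
  rw [← Polynomial.deriv]
  exact deriv_eq_zero_of_isLocalMax_abs (hmax.isLocalMax (Icc_mem_nhds hx₀'.1 hx₀'.2)) hne
end

section
/- Let n ≥ 3 be an integer and let N be a real number with N_min(n) < N < n, where N_min(n) is the maximum of |U_{n-1}(x)| over [-cos(π/n), cos(π/n)]. Then the equation |U_{n-1}(x)| = N has exactly one solution x₀ in (0, 1) and exactly one solution in (-1, 0), which equals -x₀; moreover |U_{n-1}(x)| < N for |x| < x₀ and |U_{n-1}(x)| > N for x₀ < |x| ≤ 1. -/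
open Polynomial Polynomial.Chebyshev Real

/-! The roots of `U_{n-1}` are the `cos (kπ/n)`, `0 < k < n`, the largest being `cos (π/n)`.
To the right of it `U_{n-1}` is a positive multiple of a product of positive increasing linear
factors, so it increases strictly from `0` to `U_{n-1}(1) = n`, while on
`[-cos (π/n), cos (π/n)]` its absolute value is at most `N_min < N`. Hence `|U_{n-1}|` crosses
the level `N` exactly once on `[0, 1]`, and it is even. -/

namespace Polynomial

theorem strictMonoOn_eval_of_roots_le {R : Type*} [CommRing R] [LinearOrder R]
    [IsStrictOrderedRing R] {p : R[X]} (hsplit : Multiset.card p.roots = p.natDegree)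
    (hdeg : p.natDegree ≠ 0) (hlc : 0 < p.leadingCoeff) {c : R} (hc : ∀ r ∈ p.roots, r ≤ c) :
    StrictMonoOn p.eval (Set.Ici c) := by
  have heval : ∀ x, p.eval x = p.leadingCoeff * (p.roots.map (fun r => x - r)).prod := by
    intro x
    conv_lhs => rw [← C_leadingCoeff_mul_prod_multiset_X_sub_C hsplit]
    simp [eval_multiset_prod, Multiset.map_map]
  have hne : p.roots ≠ 0 := fun h => hdeg (by rw [← hsplit, h, Multiset.card_zero])
  intro a (ha : c ≤ a) b _ hab
  have hb : ∀ r ∈ p.roots, 0 < b - r := fun r hr => by linarith [hc r hr]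
  show p.eval a < p.eval b
  rw [heval, heval]
  refine mul_lt_mul_of_pos_left ?_ hlc
  by_cases ha' : ∀ r ∈ p.roots, 0 < a - r
  · exact Multiset.prod_map_lt_prod_map hne _ _ ha' fun r _ => by linarith
  · simp only [not_forall, not_lt] at ha'
    obtain ⟨r, hr, har⟩ := ha'
    have hzero : (0 : R) ∈ p.roots.map (fun r => a - r) :=
      Multiset.mem_map.2 ⟨r, hr, by linarith [hc r hr]⟩
    rw [Multiset.prod_eq_zero hzero]
    exact Multiset.prod_pos fun x hx => by
      obtain ⟨r, hr, rfl⟩ := Multiset.mem_map.1 hx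
      exact hb r hr

end Polynomial

namespace Polynomial.Chebyshev

theorem card_roots_U_real (m : ℕ) :
    Multiset.card (U ℝ m).roots = (U ℝ m).natDegree := by
  rw [roots_U_real, natDegree_U_natCast, Finset.card_val,
    Finset.card_image_of_injOn ((Finset.range m).nodup_map_iff_injOn.mp (roots_U_real_nodup m)),
    Finset.card_range]

theorem roots_U_real_le (m : ℕ) : ∀ r ∈ (U ℝ m).roots, r ≤ cos (π / (m + 1)) := by
  rw [roots_U_real]
  intro r hr
  rw [Finset.mem_val, Finset.mem_image] at hr
  obtain ⟨k, hk, rfl⟩ := hr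
  have hk : (k : ℝ) + 1 ≤ m + 1 := by exact_mod_cast Nat.succ_le_succ (Finset.mem_range.1 hk).le
  apply cos_le_cos_of_nonneg_of_le_pi (by positivity)
  · rw [div_le_iff₀ (by positivity)]
    nlinarith [pi_pos]
  · rw [mul_div_assoc]
    exact le_mul_of_one_le_left (by positivity) (by linarith [(Nat.cast_nonneg k : (0 : ℝ) ≤ k)])

theorem eval_U_real_cos_pi_div {m : ℕ} (hm : m ≠ 0) :
    (U ℝ m).eval (cos (π / (m + 1))) = 0 := by
  have hmem : cos (π / (m + 1)) ∈ (U ℝ m).roots := by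
    rw [roots_U_real]
    exact Finset.mem_image.2 ⟨0, Finset.mem_range.2 (Nat.pos_of_ne_zero hm), by simp⟩
  exact isRoot_of_mem_roots hmem

theorem strictMonoOn_eval_U_real {m : ℕ} (hm : m ≠ 0) :
    StrictMonoOn (U ℝ m).eval (Set.Ici (cos (π / (m + 1)))) :=
  strictMonoOn_eval_of_roots_le (card_roots_U_real m) (by rwa [natDegree_U_natCast])
    (by rw [leadingCoeff_U_natCast]; positivity) (roots_U_real_le m)

theorem strictMonoOn_abs_eval_U_real {m : ℕ} (hm : m ≠ 0) :
    StrictMonoOn (fun x => |(U ℝ m).eval x|) (Set.Ici (cos (π / (m + 1)))) := by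
  have hmono := strictMonoOn_eval_U_real hm
  have hnonneg : ∀ t ∈ Set.Ici (cos (π / (m + 1))), 0 ≤ (U ℝ m).eval t := fun t ht =>
    eval_U_real_cos_pi_div hm ▸ hmono.monotoneOn Set.self_mem_Ici ht ht
  exact hmono.congr fun t ht => (abs_of_nonneg (hnonneg t ht)).symm

theorem abs_eval_U_real_abs (m : ℕ) (x : ℝ) : |(U ℝ m).eval (|x|)| = |(U ℝ m).eval x| := by
  rcases abs_choice x with h | h <;> simp [h, abs_mul]

end Polynomial.Chebyshev

theorem cos_pi_div_nat_succ_nonneg {m : ℕ} (hm : m ≠ 0) : 0 ≤ cos (π / (m + 1)) := by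
  have hm1 : (1 : ℝ) ≤ m := by exact_mod_cast Nat.one_le_iff_ne_zero.2 hm
  refine cos_nonneg_of_mem_Icc ⟨?_, div_le_div_of_nonneg_left pi_pos.le two_pos (by linarith)⟩
  linarith [pi_pos, div_pos pi_pos (by positivity : (0 : ℝ) < m + 1)]

theorem exists_threshold_of_strictMonoOn_Ici {g : ℝ → ℝ} {a c b N : ℝ} (hac : a ≤ c)
    (hcb : c ≤ b) (hcont : ContinuousOn g (Set.Icc c b)) (hsmall : ∀ t ∈ Set.Icc a c, g t < N)
    (hmono : StrictMonoOn g (Set.Ici c)) (hN : N < g b) :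
    ∃ x₀ ∈ Set.Ioo c b, g x₀ = N ∧ (∀ t, a ≤ t → t < x₀ → g t < N) ∧
      (∀ t, x₀ < t → N < g t) := by
  obtain ⟨x₀, ⟨hcx₀, hx₀b⟩, hx₀⟩ :=
    intermediate_value_Ioo hcb hcont ⟨hsmall c ⟨hac, le_rfl⟩, hN⟩
  refine ⟨x₀, ⟨hcx₀, hx₀b⟩, hx₀, fun t hat htx => ?_, fun t htx => ?_⟩
  · rcases le_or_gt t c with htc | htc
    · exact hsmall t ⟨hat, htc⟩
    · exact hx₀ ▸ hmono htc.le hcx₀.le htx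
  · exact hx₀ ▸ hmono hcx₀.le (hcx₀.le.trans htx.le) htx

theorem exists_unique_x0 (n : ℕ) (hn : 3 ≤ n) (Nmin N : ℝ)
    (hNmin : IsGreatest ((fun x : ℝ => |(U ℝ ((n : ℤ) - 1)).eval x|) ''
      Set.Icc (-(Real.cos (π / n))) (Real.cos (π / n))) Nmin)
    (hN₁ : Nmin < N) (hN₂ : N < n) :
    (∃! x₀ : ℝ, x₀ ∈ Set.Ioo (0 : ℝ) 1 ∧ |(U ℝ ((n : ℤ) - 1)).eval x₀| = N) ∧
    (∀ x₀ : ℝ, x₀ ∈ Set.Ioo (0 : ℝ) 1 → |(U ℝ ((n : ℤ) - 1)).eval x₀| = N →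
      (∀ x ∈ Set.Ioo (-1 : ℝ) 0, |(U ℝ ((n : ℤ) - 1)).eval x| = N ↔ x = -x₀) ∧
      (∀ x : ℝ, |x| < x₀ → |(U ℝ ((n : ℤ) - 1)).eval x| < N) ∧
      (∀ x : ℝ, x₀ < |x| → |x| ≤ 1 → N < |(U ℝ ((n : ℤ) - 1)).eval x|)) := by
  obtain ⟨m, rfl⟩ : ∃ m, n = m + 1 := ⟨n - 1, by omega⟩
  have hm : m ≠ 0 := by omega
  rw [show ((m + 1 : ℕ) : ℤ) - 1 = m by push_cast; ring] at hNmin ⊢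
  push_cast at hNmin hN₂
  have hc := cos_pi_div_nat_succ_nonneg hm
  have hP1 : |(U ℝ m).eval 1| = m + 1 := by
    rw [U_eval_one, Int.cast_natCast]
    exact abs_of_pos (by positivity)
  obtain ⟨x₀, ⟨hcx₀, hx₀1⟩, hx₀, hbelow, habove⟩ := exists_threshold_of_strictMonoOn_Ici hc
    (cos_le_one _) (U ℝ m).continuous.abs.continuousOn
    (fun t ht => (hNmin.2 ⟨t, ⟨by linarith [ht.1], ht.2⟩, rfl⟩).trans_lt hN₁)
    (strictMonoOn_abs_eval_U_real hm) (hP1 ▸ hN₂)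
  have hlevel : ∀ t, 0 ≤ t → (|(U ℝ m).eval t| = N ↔ t = x₀) := by
    refine fun t ht => ⟨fun htN => ?_, fun htx => htx ▸ hx₀⟩
    rcases lt_trichotomy t x₀ with h | h | h
    · exact absurd htN (hbelow t ht h).ne
    · exact h
    · exact absurd htN (habove t h).ne'
  refine ⟨⟨x₀, ⟨⟨hc.trans_lt hcx₀, hx₀1⟩, hx₀⟩, fun y hy => (hlevel y hy.1.1.le).1 hy.2⟩,
    fun z hz hzN => ?_⟩
  obtain rfl := (hlevel z hz.1.le).1 hzN
  refine ⟨fun x hx => ?_, fun x hx => ?_, fun x hx _ => ?_⟩ <;> rw [← abs_eval_U_real_abs]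
  · rw [hlevel _ (abs_nonneg x), abs_of_neg hx.2, neg_eq_iff_eq_neg]
  · exact hbelow _ (abs_nonneg x) hx
  · exact habove _ hx
end

section
/- Let α > 0 be real. The cubic equation λ·(λ - ρ - α²)² + π²α⁴/4 = 0 in λ has a repeated root if and only if ρ equals one of the three values ρ_c(m) = -α² - 3·(πα²/4)^{2/3}·exp(i·2mπ/3) for m ∈ {-1, 0, 1}; in that case the repeated root is the double root λ_c(m) = -(πα²/4)^{2/3}·exp(i·2mπ/3), whose absolute value is (πα²/4)^{2/3}. -/
open Polynomial Real

/-!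
With `s = ρ + α²`, a multiple root of `X (X - s)² + K` is a common root with its derivative
`(X - s)(3X - s)`. Since `K ≠ 0` it cannot be `s`, so it is `l = s / 3`, and the equation becomes
`4 l³ + K = 0`.
Here `K = π² α⁴ / 4 = 4 c³` with `c = (π α² / 4) ^ (2/3)`, so `l³ = (-c)³` and `l` is `-c` times
a cube root of unity `exp (2 m π i / 3)`, `m ∈ {-1, 0, 1}`.
-/

namespace Polynomial

variable {R : Type*} [CommRing R]

theorem derivative_X_mul_X_sub_C_sq_add_C (s K : R) :
    derivative (X * (X - C s) ^ 2 + C K) = (X - C s) * (3 * X - C s) := by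
  simp only [derivative_add, derivative_mul, derivative_X, derivative_pow, derivative_sub,
    derivative_C, map_ofNat, Nat.cast_ofNat, Nat.add_one_sub_one, pow_one, one_mul, mul_one,
    sub_zero, add_zero]
  ring

theorem two_le_rootMultiplicity_X_mul_X_sub_C_sq_add_C_iff [IsDomain R] {s K : R} (hK : K ≠ 0)
    (l : R) :
    2 ≤ (X * (X - C s) ^ 2 + C K).rootMultiplicity l ↔ s = 3 * l ∧ 4 * l ^ 3 + K = 0 := by
  have hP : X * (X - C s) ^ 2 + C K ≠ 0 := fun h ↦ hK <| by
    simpa using congrArg (eval s) h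
  change 1 < _ ↔ _
  rw [one_lt_rootMultiplicity_iff_isRoot hP, derivative_X_mul_X_sub_C_sq_add_C]
  simp only [IsRoot, eval_add, eval_mul, eval_pow, eval_sub, eval_X, eval_C, eval_ofNat]
  constructor
  · rintro ⟨hroot, hcrit⟩
    rcases mul_eq_zero.mp hcrit with hls | hls
    · obtain rfl := sub_eq_zero.mp hls
      exact absurd (by simpa using hroot) hK
    · have hs : s = 3 * l := (sub_eq_zero.mp hls).symm
      exact ⟨hs, by rw [hs] at hroot; linear_combination hroot⟩
  · rintro ⟨rfl, h⟩
    exact ⟨by linear_combination h, by ring⟩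

end Polynomial

theorem IsPrimitiveRoot.pow_three_eq_pow_three_iff {F : Type*} [Field F] {ω : F}
    (hω : IsPrimitiveRoot ω 3) {a : F} (ha : a ≠ 0) (l : F) :
    l ^ 3 = a ^ 3 ↔ ∃ m ∈ ({-1, 0, 1} : Set ℤ), l = a * ω ^ m := by
  constructor
  · intro h
    obtain ⟨i, hi, hωi⟩ := hω.eq_pow_of_pow_eq_one (ξ := l / a)
      (by rw [div_pow, h, div_self (pow_ne_zero 3 ha)])
    have hl : l = a * ω ^ i := by rw [hωi, mul_div_cancel₀ _ ha]
    interval_cases i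
    · exact ⟨0, by simp, by simpa using hl⟩
    · exact ⟨1, by simp, by simpa using hl⟩
    · refine ⟨-1, by simp, ?_⟩
      rw [hl, zpow_neg_one, inv_eq_of_mul_eq_one_right (by rw [← pow_succ']; exact hω.pow_eq_one)]
  · rintro ⟨m, -, rfl⟩
    rw [mul_pow, ← zpow_natCast (ω ^ m), ← zpow_mul, mul_comm m, zpow_mul, zpow_natCast,
      hω.pow_eq_one, one_zpow, mul_one]

theorem Real.rpow_two_div_three_pow_three {x : ℝ} (hx : 0 ≤ x) : (x ^ ((2 : ℝ) / 3)) ^ 3 = x ^ 2 := by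
  rw [← Real.rpow_natCast, ← Real.rpow_mul hx]
  norm_num

theorem Complex.exp_I_mul_two_mul_int_mul_pi_div_three (m : ℤ) :
    Complex.exp (Complex.I * (2 * m * π / 3)) = Complex.exp (2 * π * Complex.I / 3) ^ m := by
  rw [← Complex.exp_int_mul]
  ring_nf

theorem cubic_repeated_roots (α : ℝ) (hα : 0 < α) (ρ : ℂ)
    (P : ℂ[X])
    (hP : P = X * (X - C (ρ + (α : ℂ) ^ 2)) ^ 2 + C ((π : ℂ) ^ 2 * (α : ℂ) ^ 4 / 4))
    (ρc lc : ℤ → ℂ)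
    (hρc : ∀ m : ℤ, ρc m = -(α : ℂ) ^ 2 -
      3 * ((π * α ^ 2 / 4 : ℝ) ^ ((2 : ℝ) / 3) : ℝ) * Complex.exp (Complex.I * (2 * m * π / 3)))
    (hlc : ∀ m : ℤ, lc m =
      -((π * α ^ 2 / 4 : ℝ) ^ ((2 : ℝ) / 3) : ℝ) * Complex.exp (Complex.I * (2 * m * π / 3))) :
    ((∃ l : ℂ, 2 ≤ P.rootMultiplicity l) ↔ ∃ m ∈ ({-1, 0, 1} : Set ℤ), ρ = ρc m) ∧
    (∀ m ∈ ({-1, 0, 1} : Set ℤ), ρ = ρc m →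
      2 ≤ P.rootMultiplicity (lc m) ∧
      ‖lc m‖ = (π * α ^ 2 / 4 : ℝ) ^ ((2 : ℝ) / 3)) := by
  set c : ℝ := (π * α ^ 2 / 4) ^ ((2 : ℝ) / 3)
  set ω : ℂ := Complex.exp (2 * π * Complex.I / 3)
  have hω : IsPrimitiveRoot ω 3 := by
    convert Complex.isPrimitiveRoot_exp 3 three_ne_zero
    norm_num
  have hc : 0 < c := by positivity
  have hc0 : (c : ℂ) ≠ 0 := by exact_mod_cast hc.ne'
  have hK : (π : ℂ) ^ 2 * α ^ 4 / 4 = 4 * (c : ℂ) ^ 3 := by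
    have h := congrArg ((↑) : ℝ → ℂ)
      (Real.rpow_two_div_three_pow_three (x := π * α ^ 2 / 4) (by positivity))
    push_cast at h
    linear_combination -4 * h
  have hlc' (m : ℤ) : lc m = -c * ω ^ m := by rw [hlc, Complex.exp_I_mul_two_mul_int_mul_pi_div_three]
  have hdouble (l : ℂ) : 2 ≤ P.rootMultiplicity l ↔
      ρ + α ^ 2 = 3 * l ∧ ∃ m ∈ ({-1, 0, 1} : Set ℤ), l = lc m := by
    rw [hP, hK, two_le_rootMultiplicity_X_mul_X_sub_C_sq_add_C_iff
      (mul_ne_zero (by norm_num) (pow_ne_zero 3 hc0))]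
    simp only [hlc', ← hω.pow_three_eq_pow_three_iff (neg_ne_zero.2 hc0)]
    exact and_congr_right fun _ ↦
      ⟨fun h ↦ by linear_combination h / 4, fun h ↦ by linear_combination 4 * h⟩
  have hroot (m : ℤ) (hm : m ∈ ({-1, 0, 1} : Set ℤ)) (hρ : ρ = ρc m) :
      2 ≤ P.rootMultiplicity (lc m) :=
    (hdouble _).2 ⟨by rw [hρ, hρc, hlc]; ring, m, hm, rfl⟩
  refine ⟨⟨fun ⟨l, hl⟩ ↦ ?_, fun ⟨m, hm, hρ⟩ ↦ ⟨lc m, hroot m hm hρ⟩⟩,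
    fun m hm hρ ↦ ⟨hroot m hm hρ, ?_⟩⟩
  · obtain ⟨hs, m, hm, rfl⟩ := (hdouble l).1 hl
    rw [hlc] at hs
    exact ⟨m, hm, by rw [hρc]; linear_combination hs⟩
  · rw [hlc', norm_mul, norm_zpow, hω.norm'_eq_one (by norm_num), one_zpow, mul_one, norm_neg,
      Complex.norm_real, Real.norm_of_nonneg hc.le]
end
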